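/- (Discrete Gronwall) Let (e_n) be nonnegative reals with e₀ = 0 satisfying e_n ≤ Cτ Σ_{j=1}^{n-2} t_{n−j−1}^{−γ} e_j + C τ^{1−γ} e_{n−1} + C t_n^{−1+2ζ} τ^{3−2ζ} for all 1 ≤ n ≤ N, where t_j = jτ, γ ∈ (0,1), ζ ∈ (0, 1/2), and Nτ ≤ T. Then there is a constant C' depending only on C, γ, ζ, T such that e_n ≤ C' t_n^{−1+2ζ} τ^{3−2ζ} for all 1 ≤ n ≤ N. -/

import Mathlib

/-!
With the weight `W n = t_n ^ (-1 + 2ζ) * exp (λ t_n)` one shows `e n ≤ 2 C τ ^ (3 - 2ζ) W n` by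
strong induction, after choosing `λ` so large that the discrete convolution
`∑_{0<j<n} τ t_{n-j} ^ (-γ) W j` is at most `W n / (4C)`; since `t_n ≤ T` the weight is then
absorbed into `C' = 2 C exp (λ T)`. The term `C τ ^ (1 - γ) e (n - 1)` is the `j = n - 1` term of
the convolution, once the shifted kernel `t_{n-j-1} ^ (-γ)` is bounded by `2 t_{n-j} ^ (-γ)`.

The convolution is split at `j = n / 2`. Near the diagonal `W j ≤ 2 W n exp (-λ t_{n-j})`, and
`∑ τ t_k ^ (-γ) exp (-λ t_k) ≤ δ ^ (1 - γ) / (1 - γ) + δ ^ (-γ) / λ` (cut at `t_k = δ`). Away from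
it the kernel is at most `2 t_n ^ (-γ)`, `exp (λ t_j) ≤ exp (λ t_n / 2)`, and the factor
`t_n ^ (1 - γ) exp (-λ t_n / 2)` left over after summing `τ t_j ^ (-1 + 2ζ) ≲ t_n ^ (2ζ)` is
again small for small `δ` and large `λ`.
-/

open Real Finset

lemma rpow_le_two_mul_rpow_of_le_two_mul {s t σ : ℝ} (hs : 0 < s) (ht : 0 < t) (hts : t ≤ 2 * s)
    (hσ₁ : -1 ≤ σ) (hσ₀ : σ ≤ 0) : s ^ σ ≤ 2 * t ^ σ := by
  have h2 : (2 : ℝ) ^ (-σ) ≤ 2 := by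
    simpa using rpow_le_rpow_of_exponent_le one_le_two (by linarith : -σ ≤ 1)
  calc s ^ σ = 2 ^ (-σ) * (2 * s) ^ σ := by
        rw [mul_rpow zero_le_two hs.le, ← mul_assoc, ← rpow_add two_pos]; simp
    _ ≤ 2 * t ^ σ :=
        mul_le_mul h2 (rpow_le_rpow_of_nonpos ht hts hσ₀) (by positivity) zero_le_two

lemma mul_rpow_sub_one_mul_sub_le {a b p : ℝ} (ha : 0 ≤ a) (hb : 0 < b)
    (hp₀ : 0 ≤ p) (hp₁ : p ≤ 1) : p * b ^ (p - 1) * (b - a) ≤ b ^ p - a ^ p := by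
  have h := rpow_one_add_le_one_add_mul_self (s := a / b - 1) (by linarith [div_nonneg ha hb.le])
    hp₀ hp₁
  rw [add_sub_cancel, div_rpow ha hb.le, div_le_iff₀ (rpow_pos_of_pos hb p)] at h
  have hbp : b ^ p = b ^ (p - 1) * b := by rw [← rpow_add_one hb.ne']; ring_nf
  calc p * b ^ (p - 1) * (b - a) = b ^ p - (1 + p * (a / b - 1)) * b ^ p := by
        rw [hbp]; field_simp; ring
    _ ≤ b ^ p - a ^ p := by linarith

lemma sum_Icc_mul_rpow_le {τ β : ℝ} (hτ : 0 < τ) (hβ₁ : -1 < β) (hβ₀ : β ≤ 0) (n : ℕ) :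
    ∑ j ∈ Icc 1 n, τ * ((j : ℝ) * τ) ^ β ≤ ((n : ℝ) * τ) ^ (β + 1) / (β + 1) := by
  induction n with
  | zero => simp [zero_rpow (by linarith : β + 1 ≠ 0)]
  | succ m ih =>
    rw [sum_Icc_succ_top (Nat.le_add_left 1 m)]
    have hstep := mul_rpow_sub_one_mul_sub_le (a := m * τ) (b := (m + 1 : ℕ) * τ) (p := β + 1)
      (by positivity) (by positivity) (by linarith) (by linarith)
    rw [add_sub_cancel_right] at hstep
    have hsub : ((m + 1 : ℕ) : ℝ) * τ - m * τ = τ := by push_cast; ring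
    rw [hsub] at hstep
    have hβ : 0 < β + 1 := by linarith
    calc ∑ j ∈ Icc 1 m, τ * ((j : ℝ) * τ) ^ β + τ * (((m + 1 : ℕ) : ℝ) * τ) ^ β
        ≤ ((m : ℝ) * τ) ^ (β + 1) / (β + 1)
          + ((((m + 1 : ℕ) : ℝ) * τ) ^ (β + 1) - ((m : ℝ) * τ) ^ (β + 1)) / (β + 1) := by
          gcongr
          rw [le_div_iff₀ hβ]; linarith
      _ = _ := by ring

lemma sum_filter_mul_rpow_le {τ δ β : ℝ} (hτ : 0 < τ) (hδ : 0 ≤ δ) (hβ₁ : -1 < β) (hβ₀ : β ≤ 0)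
    (n : ℕ) :
    ∑ k ∈ (Ico 1 n).filter (fun k : ℕ => (k : ℝ) * τ ≤ δ), τ * ((k : ℝ) * τ) ^ β
      ≤ δ ^ (β + 1) / (β + 1) := by
  set K := ⌊δ / τ⌋₊
  have hsub : (Ico 1 n).filter (fun k : ℕ => (k : ℝ) * τ ≤ δ) ⊆ Icc 1 K := by
    intro k hk
    simp only [mem_filter, mem_Ico, mem_Icc] at hk ⊢
    exact ⟨hk.1.1, Nat.le_floor ((le_div_iff₀ hτ).mpr hk.2)⟩
  have hKδ : (K : ℝ) * τ ≤ δ := (le_div_iff₀ hτ).mp (Nat.floor_le (by positivity))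
  have hβ : 0 < β + 1 := by linarith
  calc _ ≤ ∑ k ∈ Icc 1 K, τ * ((k : ℝ) * τ) ^ β :=
        sum_le_sum_of_subset_of_nonneg hsub (fun _ _ _ => by positivity)
    _ ≤ ((K : ℝ) * τ) ^ (β + 1) / (β + 1) := sum_Icc_mul_rpow_le hτ hβ₁ hβ₀ K
    _ ≤ δ ^ (β + 1) / (β + 1) := by gcongr

lemma sum_Ico_mul_exp_neg_le {τ lam : ℝ} (hτ : 0 < τ) (hlam : 0 < lam) (n : ℕ) :
    ∑ k ∈ Ico 1 n, τ * exp (-(lam * (k * τ))) ≤ 1 / lam := by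
  set r := exp (-(lam * τ))
  have hr : r < 1 := exp_lt_one_iff.mpr (neg_neg_of_pos (by positivity))
  have hgeom : ∑ k ∈ Ico 1 n, r ^ k ≤ r / (1 - r) := by
    simpa using geom_sum_Ico_le_of_lt_one (m := 1) (n := n) (exp_pos _).le hr
  have hexp : r * (1 + lam * τ) ≤ 1 := by
    calc r * (1 + lam * τ) ≤ r * exp (lam * τ) := by
          gcongr; linarith [add_one_le_exp (lam * τ)]
      _ = 1 := by rw [← exp_add]; simp
  have hpow (k : ℕ) : exp (-(lam * (k * τ))) = r ^ k := by
    rw [← exp_nat_mul]; ring_nf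
  simp_rw [hpow, ← mul_sum]
  calc τ * ∑ k ∈ Ico 1 n, r ^ k ≤ τ * (r / (1 - r)) := by gcongr
    _ ≤ 1 / lam := by
      rw [mul_div_assoc', div_le_div_iff₀ (by linarith) hlam]; nlinarith

lemma rpow_mul_exp_neg_le {x δ μ γ : ℝ} (hx : 0 ≤ x) (hδ : 0 < δ) (hμ : 0 < μ)
    (hγ₀ : 0 ≤ γ) (hγ₁ : γ ≤ 1) : x ^ (1 - γ) * exp (-(μ * x)) ≤ δ ^ (1 - γ) + δ ^ (-γ) / μ := by
  rcases le_or_gt x δ with hxδ | hδx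
  · have hexp : exp (-(μ * x)) ≤ 1 := exp_le_one_iff.mpr (neg_nonpos_of_nonneg (by positivity))
    calc x ^ (1 - γ) * exp (-(μ * x)) ≤ δ ^ (1 - γ) * 1 := by
          gcongr
      _ ≤ δ ^ (1 - γ) + δ ^ (-γ) / μ := by
          rw [mul_one]; exact le_add_of_nonneg_right (by positivity)
  · have hx : 0 < x := hδ.trans hδx
    have hexp : x * exp (-(μ * x)) ≤ 1 / μ := by
      rw [exp_neg, ← div_eq_mul_inv, div_le_div_iff₀ (exp_pos _) hμ]
      linarith [add_one_le_exp (μ * x)]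
    calc x ^ (1 - γ) * exp (-(μ * x)) = x ^ (-γ) * (x * exp (-(μ * x))) := by
          rw [sub_eq_neg_add, rpow_add_one hx.ne']; ring
      _ ≤ δ ^ (-γ) * (1 / μ) :=
          mul_le_mul (rpow_le_rpow_of_nonpos hδ hδx.le (by linarith)) hexp
            (by positivity) (by positivity)
      _ ≤ δ ^ (1 - γ) + δ ^ (-γ) / μ := by
          rw [mul_one_div]; exact le_add_of_nonneg_left (by positivity)

lemma sum_Ico_mul_rpow_mul_exp_neg_le {τ lam δ γ : ℝ} (hτ : 0 < τ) (hlam : 0 < lam) (hδ : 0 < δ)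
    (hγ₀ : 0 ≤ γ) (hγ₁ : γ < 1) (n : ℕ) :
    ∑ k ∈ Ico 1 n, τ * ((k : ℝ) * τ) ^ (-γ) * exp (-(lam * (k * τ)))
      ≤ δ ^ (1 - γ) / (1 - γ) + δ ^ (-γ) / lam := by
  have hpt : ∀ k ∈ Ico 1 n, τ * ((k : ℝ) * τ) ^ (-γ) * exp (-(lam * (k * τ)))
      ≤ (if (k : ℝ) * τ ≤ δ then τ * ((k : ℝ) * τ) ^ (-γ) else 0)
        + δ ^ (-γ) * (τ * exp (-(lam * (k * τ)))) := by
    intro k hk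
    have hkτ : 0 < (k : ℝ) * τ := by
      have : (1 : ℝ) ≤ k := by exact_mod_cast (mem_Ico.mp hk).1
      positivity
    split_ifs with hkδ
    · have hexp : exp (-(lam * (k * τ))) ≤ 1 :=
        exp_le_one_iff.mpr (neg_nonpos_of_nonneg (by positivity))
      have : τ * ((k : ℝ) * τ) ^ (-γ) * exp (-(lam * (k * τ))) ≤ τ * ((k : ℝ) * τ) ^ (-γ) :=
        mul_le_of_le_one_right (by positivity) hexp
      linarith [show 0 ≤ δ ^ (-γ) * (τ * exp (-(lam * (k * τ)))) by positivity]
    · have : ((k : ℝ) * τ) ^ (-γ) ≤ δ ^ (-γ) :=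
        rpow_le_rpow_of_nonpos hδ (not_le.mp hkδ).le (by linarith)
      calc τ * ((k : ℝ) * τ) ^ (-γ) * exp (-(lam * (k * τ)))
          ≤ τ * δ ^ (-γ) * exp (-(lam * (k * τ))) := by gcongr
        _ = 0 + δ ^ (-γ) * (τ * exp (-(lam * (k * τ)))) := by ring
  have hnear := sum_filter_mul_rpow_le hτ hδ.le (β := -γ) (by linarith) (by linarith) n
  rw [neg_add_eq_sub] at hnear
  have hfar := sum_Ico_mul_exp_neg_le hτ hlam n
  calc _ ≤ ∑ k ∈ Ico 1 n, ((if (k : ℝ) * τ ≤ δ then τ * ((k : ℝ) * τ) ^ (-γ) else 0)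
        + δ ^ (-γ) * (τ * exp (-(lam * (k * τ))))) := sum_le_sum hpt
    _ ≤ δ ^ (1 - γ) / (1 - γ) + δ ^ (-γ) * (1 / lam) := by
        rw [sum_add_distrib, ← sum_filter]
        exact add_le_add hnear (by rw [← mul_sum]; gcongr)
    _ = δ ^ (1 - γ) / (1 - γ) + δ ^ (-γ) / lam := by ring

lemma convolution_term_le {τ lam γ β : ℝ} (hτ : 0 < τ) (hlam : 0 < lam)
    (hγ₀ : 0 ≤ γ) (hγ₁ : γ ≤ 1) (hβ₁ : -1 ≤ β) (hβ₀ : β ≤ 0) {n j : ℕ} (hj : j ∈ Ico 1 n) :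
    τ * (((n - j : ℕ) : ℝ) * τ) ^ (-γ) * (((j : ℝ) * τ) ^ β * exp (lam * (j * τ)))
      ≤ 2 * (((n : ℝ) * τ) ^ β * exp (lam * (n * τ)))
          * (τ * (((n - j : ℕ) : ℝ) * τ) ^ (-γ) * exp (-(lam * ((n - j : ℕ) * τ))))
        + 2 * ((n : ℝ) * τ) ^ (-γ) * exp (lam * (n * τ) / 2) * (τ * ((j : ℝ) * τ) ^ β) := by
  obtain ⟨hj₁, hjn⟩ := mem_Ico.mp hj
  have hcast : ((n - j : ℕ) : ℝ) = n - j := Nat.cast_sub hjn.le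
  have hjτ : 0 < (j : ℝ) * τ := by
    have : (1 : ℝ) ≤ j := by exact_mod_cast hj₁
    positivity
  have hnjτ : 0 < ((n - j : ℕ) : ℝ) * τ := by
    have : (1 : ℝ) ≤ (n - j : ℕ) := by exact_mod_cast (by omega : 1 ≤ n - j)
    positivity
  have hnτ : 0 < (n : ℝ) * τ := by
    have : (1 : ℝ) ≤ n := by exact_mod_cast (by omega : 1 ≤ n)
    positivity
  rcases le_or_gt n (2 * j) with hnear | hfar
  · have hβ : ((j : ℝ) * τ) ^ β ≤ 2 * ((n : ℝ) * τ) ^ β := by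
      refine rpow_le_two_mul_rpow_of_le_two_mul hjτ hnτ ?_ hβ₁ hβ₀
      have : (n : ℝ) ≤ 2 * j := by exact_mod_cast hnear
      nlinarith
    have hexp : exp (lam * (j * τ)) = exp (lam * (n * τ)) * exp (-(lam * ((n - j : ℕ) * τ))) := by
      rw [← exp_add, hcast]; ring_nf
    have : τ * (((n - j : ℕ) : ℝ) * τ) ^ (-γ) * (((j : ℝ) * τ) ^ β * exp (lam * (j * τ)))
        ≤ 2 * (((n : ℝ) * τ) ^ β * exp (lam * (n * τ)))
          * (τ * (((n - j : ℕ) : ℝ) * τ) ^ (-γ) * exp (-(lam * ((n - j : ℕ) * τ)))) := by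
      rw [hexp]
      calc _ = τ * (((n - j : ℕ) : ℝ) * τ) ^ (-γ) * (((j : ℝ) * τ) ^ β
            * (exp (lam * (n * τ)) * exp (-(lam * ((n - j : ℕ) * τ))))) := by ring
        _ ≤ τ * (((n - j : ℕ) : ℝ) * τ) ^ (-γ) * ((2 * ((n : ℝ) * τ) ^ β)
            * (exp (lam * (n * τ)) * exp (-(lam * ((n - j : ℕ) * τ))))) := by gcongr
        _ = _ := by ring
    linarith [show 0 ≤ 2 * ((n : ℝ) * τ) ^ (-γ) * exp (lam * (n * τ) / 2)
      * (τ * ((j : ℝ) * τ) ^ β) by positivity]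
  · have hγ : (((n - j : ℕ) : ℝ) * τ) ^ (-γ) ≤ 2 * ((n : ℝ) * τ) ^ (-γ) := by
      refine rpow_le_two_mul_rpow_of_le_two_mul hnjτ hnτ ?_ (by linarith) (by linarith)
      have : (2 * j : ℝ) < n := by exact_mod_cast hfar
      rw [hcast]; nlinarith
    have hexp : exp (lam * (j * τ)) ≤ exp (lam * (n * τ) / 2) := by
      have : (2 * j : ℝ) < n := by exact_mod_cast hfar
      gcongr
      nlinarith [mul_lt_mul_of_pos_right this (mul_pos hlam hτ)]
    have : τ * (((n - j : ℕ) : ℝ) * τ) ^ (-γ) * (((j : ℝ) * τ) ^ β * exp (lam * (j * τ)))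
        ≤ 2 * ((n : ℝ) * τ) ^ (-γ) * exp (lam * (n * τ) / 2) * (τ * ((j : ℝ) * τ) ^ β) := by
      calc _ ≤ τ * (2 * ((n : ℝ) * τ) ^ (-γ)) * (((j : ℝ) * τ) ^ β * exp (lam * (n * τ) / 2)) := by
            gcongr
        _ = _ := by ring
    linarith [show 0 ≤ 2 * (((n : ℝ) * τ) ^ β * exp (lam * (n * τ)))
      * (τ * (((n - j : ℕ) : ℝ) * τ) ^ (-γ) * exp (-(lam * ((n - j : ℕ) * τ)))) by positivity]

lemma far_from_diagonal_le {τ lam δ γ β : ℝ} (hτ : 0 < τ) (hlam : 0 < lam) (hδ : 0 < δ)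
    (hγ₀ : 0 ≤ γ) (hγ₁ : γ < 1) (hβ₁ : -1 < β) (hβ₀ : β ≤ 0) (n : ℕ) :
    2 * ((n : ℝ) * τ) ^ (-γ) * exp (lam * (n * τ) / 2) * ∑ j ∈ Ico 1 n, τ * ((j : ℝ) * τ) ^ β
      ≤ 2 / (β + 1) * (δ ^ (1 - γ) + δ ^ (-γ) / (lam / 2))
        * (((n : ℝ) * τ) ^ β * exp (lam * (n * τ))) := by
  have hβ : 0 < β + 1 := by linarith
  rcases Nat.eq_zero_or_pos n with rfl | hn
  · rw [Ico_eq_empty_of_le zero_le_one, sum_empty, mul_zero]; positivity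
  set t := (n : ℝ) * τ
  have ht : 0 < t := by positivity
  have hsum : ∑ j ∈ Ico 1 n, τ * ((j : ℝ) * τ) ^ β ≤ t ^ (β + 1) / (β + 1) :=
    (sum_le_sum_of_subset_of_nonneg Ico_subset_Icc_self fun _ _ _ => by positivity).trans
      (sum_Icc_mul_rpow_le hτ hβ₁ hβ₀ n)
  have htail := rpow_mul_exp_neg_le ht.le hδ (half_pos hlam) hγ₀ hγ₁.le
  have hsplit : 2 * t ^ (-γ) * exp (lam * t / 2) * (t ^ (β + 1) / (β + 1))
      = 2 / (β + 1) * (t ^ (1 - γ) * exp (-(lam / 2 * t))) * (t ^ β * exp (lam * t)) := by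
    have hpow : t ^ (-γ) * t ^ (β + 1) = t ^ β * t ^ (1 - γ) := by
      rw [← rpow_add ht, ← rpow_add ht]; ring_nf
    have hexp : exp (lam * t / 2) = exp (lam * t) * exp (-(lam / 2 * t)) := by
      rw [← exp_add]; ring_nf
    rw [hexp]
    calc _ = 2 / (β + 1) * (t ^ (-γ) * t ^ (β + 1)) * exp (lam * t) * exp (-(lam / 2 * t)) := by
          ring
      _ = _ := by rw [hpow]; ring
  calc _ ≤ 2 * t ^ (-γ) * exp (lam * t / 2) * (t ^ (β + 1) / (β + 1)) := by gcongr
    _ ≤ 2 / (β + 1) * (δ ^ (1 - γ) + δ ^ (-γ) / (lam / 2)) * (t ^ β * exp (lam * t)) := by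
      rw [hsplit]
      gcongr

lemma sum_Ico_convolution_le {τ lam δ γ β : ℝ} (hτ : 0 < τ) (hlam : 0 < lam) (hδ : 0 < δ)
    (hγ₀ : 0 ≤ γ) (hγ₁ : γ < 1) (hβ₁ : -1 < β) (hβ₀ : β ≤ 0) (n : ℕ) :
    ∑ j ∈ Ico 1 n, τ * (((n - j : ℕ) : ℝ) * τ) ^ (-γ) * (((j : ℝ) * τ) ^ β * exp (lam * (j * τ)))
      ≤ (2 * (δ ^ (1 - γ) / (1 - γ) + δ ^ (-γ) / lam)
          + 2 / (β + 1) * (δ ^ (1 - γ) + δ ^ (-γ) / (lam / 2)))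
        * (((n : ℝ) * τ) ^ β * exp (lam * (n * τ))) := by
  set W := ((n : ℝ) * τ) ^ β * exp (lam * (n * τ))
  have hnear : ∑ j ∈ Ico 1 n, τ * (((n - j : ℕ) : ℝ) * τ) ^ (-γ) * exp (-(lam * ((n - j : ℕ) * τ)))
      ≤ δ ^ (1 - γ) / (1 - γ) + δ ^ (-γ) / lam := by
    rw [sum_Ico_reflect (fun k => τ * ((k : ℝ) * τ) ^ (-γ) * exp (-(lam * (k * τ)))) 1
      (Nat.le_succ n)]
    simpa using sum_Ico_mul_rpow_mul_exp_neg_le hτ hlam hδ hγ₀ hγ₁ n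
  have hfar := far_from_diagonal_le hτ hlam hδ hγ₀ hγ₁ hβ₁ hβ₀ n
  calc _ ≤ ∑ j ∈ Ico 1 n, (2 * W
          * (τ * (((n - j : ℕ) : ℝ) * τ) ^ (-γ) * exp (-(lam * ((n - j : ℕ) * τ))))
        + 2 * ((n : ℝ) * τ) ^ (-γ) * exp (lam * (n * τ) / 2) * (τ * ((j : ℝ) * τ) ^ β)) :=
        sum_le_sum fun j hj =>
          convolution_term_le hτ hlam hγ₀ hγ₁.le hβ₁.le hβ₀ hj
    _ ≤ 2 * W * (δ ^ (1 - γ) / (1 - γ) + δ ^ (-γ) / lam)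
        + 2 / (β + 1) * (δ ^ (1 - γ) + δ ^ (-γ) / (lam / 2)) * W := by
        rw [sum_add_distrib, ← mul_sum, ← mul_sum]
        gcongr
    _ = _ := by ring

lemma exists_sum_Ico_convolution_le {γ β ε : ℝ} (hγ₀ : 0 ≤ γ) (hγ₁ : γ < 1) (hβ₁ : -1 < β)
    (hβ₀ : β ≤ 0) (hε : 0 < ε) :
    ∃ lam > 0, ∀ τ, 0 < τ → ∀ n : ℕ,
      ∑ j ∈ Ico 1 n, τ * (((n - j : ℕ) : ℝ) * τ) ^ (-γ) * (((j : ℝ) * τ) ^ β * exp (lam * (j * τ)))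
        ≤ ε * (((n : ℝ) * τ) ^ β * exp (lam * (n * τ))) := by
  have hβ : 0 < β + 1 := by linarith
  set B₁ := 2 / (1 - γ) + 2 / (β + 1)
  set B₂ := 2 + 4 / (β + 1)
  have hB₁ : 0 < B₁ := by
    have : 0 < 1 - γ := by linarith
    positivity
  set δ := (ε / (2 * B₁)) ^ (1 - γ)⁻¹
  have hδ : 0 < δ := by positivity
  have hδγ : δ ^ (1 - γ) = ε / (2 * B₁) := rpow_inv_rpow (by positivity) (by linarith)
  have hB₂ : 0 < B₂ := by positivity
  set lam := 2 * B₂ * δ ^ (-γ) / ε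
  have hlam : 0 < lam := by positivity
  have hδlam : δ ^ (-γ) / lam = ε / (2 * B₂) := by
    have : δ ^ (-γ) ≠ 0 := by positivity
    simp only [lam]
    field_simp
  clear_value lam
  refine ⟨lam, hlam, fun τ hτ n => ?_⟩
  refine (sum_Ico_convolution_le hτ hlam hδ hγ₀ hγ₁ hβ₁ hβ₀ n).trans_eq ?_
  congr 1
  calc _ = δ ^ (1 - γ) * B₁ + δ ^ (-γ) / lam * B₂ := by ring
    _ = ε := by rw [hδγ, hδlam]; field_simp; ring

lemma shifted_kernel_sum_le {τ γ : ℝ} {e : ℕ → ℝ} (hτ : 0 < τ) (hγ₀ : 0 ≤ γ) (hγ₁ : γ ≤ 1)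
    (he : ∀ n, 0 ≤ e n) (he₀ : e 0 = 0) (n : ℕ) :
    τ * ∑ j ∈ Icc 1 (n - 2), (((n - j - 1 : ℕ) : ℝ) * τ) ^ (-γ) * e j + τ ^ (1 - γ) * e (n - 1)
      ≤ 2 * ∑ j ∈ Ico 1 n, τ * (((n - j : ℕ) : ℝ) * τ) ^ (-γ) * e j := by
  match n with
  | 0 | 1 => simp [he₀]
  | m + 2 =>
    have hterm : ∀ j ∈ Icc 1 m, τ * ((((m + 2 - j - 1 : ℕ) : ℝ) * τ) ^ (-γ) * e j)
        ≤ 2 * (τ * (((m + 2 - j : ℕ) : ℝ) * τ) ^ (-γ) * e j) := by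
      intro j hj
      have hjm := (mem_Icc.mp hj).2
      have hcast : ((m + 2 - j : ℕ) : ℝ) = ((m + 2 - j - 1 : ℕ) : ℝ) + 1 := by
        rw [← Nat.cast_add_one, Nat.sub_add_cancel (by omega)]
      have h1 : (1 : ℝ) ≤ ((m + 2 - j - 1 : ℕ) : ℝ) := by
        exact_mod_cast (by omega : 1 ≤ m + 2 - j - 1)
      have := rpow_le_two_mul_rpow_of_le_two_mul (s := ((m + 2 - j - 1 : ℕ) : ℝ) * τ)
        (t := ((m + 2 - j : ℕ) : ℝ) * τ) (σ := -γ) (by positivity) (by rw [hcast]; positivity)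
        (by rw [hcast]; nlinarith) (by linarith) (by linarith)
      have := he j
      calc _ ≤ τ * ((2 * (((m + 2 - j : ℕ) : ℝ) * τ) ^ (-γ)) * e j) := by gcongr
        _ = _ := by ring
    have hlast : τ ^ (1 - γ) * e (m + 1)
        ≤ 2 * (τ * (((m + 2 - (m + 1) : ℕ) : ℝ) * τ) ^ (-γ) * e (m + 1)) := by
      rw [show m + 2 - (m + 1) = 1 by omega, Nat.cast_one, one_mul, sub_eq_neg_add,
        rpow_add_one hτ.ne']
      have : 0 ≤ τ * τ ^ (-γ) * e (m + 1) := by have := he (m + 1); positivity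
      linarith
    rw [show m + 2 - 2 = m by omega, show m + 2 - 1 = m + 1 by omega,
      Nat.Ico_succ_right_eq_insert_Ico (by omega), sum_insert (by simp), mul_add, add_comm (2 * _),
      Ico_add_one_right_eq_Icc, mul_sum, mul_sum]
    exact add_le_add (sum_le_sum hterm) hlast

lemma le_of_subsolution_of_supersolution {K : ℕ → ℕ → ℝ} {e w b : ℕ → ℝ} {N : ℕ}
    (hK : ∀ n j, 0 ≤ K n j)
    (he : ∀ n, 1 ≤ n → n ≤ N → e n ≤ ∑ j ∈ Ico 1 n, K n j * e j + b n)
    (hw : ∀ n, 1 ≤ n → n ≤ N → ∑ j ∈ Ico 1 n, K n j * w j + b n ≤ w n) :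
    ∀ n, 1 ≤ n → n ≤ N → e n ≤ w n := by
  intro n
  induction n using Nat.strong_induction_on with
  | _ n ih =>
    intro hn hnN
    calc e n ≤ ∑ j ∈ Ico 1 n, K n j * e j + b n := he n hn hnN
      _ ≤ ∑ j ∈ Ico 1 n, K n j * w j + b n := by
        gcongr with j hj
        · exact hK n j
        · obtain ⟨hj₁, hjn⟩ := mem_Ico.mp hj
          exact ih j hjn hj₁ (by omega)
      _ ≤ w n := hw n hn hnN

lemma sum_kernel_mul_add_le_of_convolution_le {C γ β lam τ s : ℝ} (hC : 0 < C) (hs : 0 ≤ s)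
    (hlam : 0 ≤ lam) (hτ : 0 < τ) {n : ℕ}
    (hconv : ∑ j ∈ Ico 1 n, τ * (((n - j : ℕ) : ℝ) * τ) ^ (-γ)
        * (((j : ℝ) * τ) ^ β * exp (lam * (j * τ)))
      ≤ 1 / (4 * C) * (((n : ℝ) * τ) ^ β * exp (lam * (n * τ)))) :
    ∑ j ∈ Ico 1 n, 2 * C * (τ * (((n - j : ℕ) : ℝ) * τ) ^ (-γ))
        * (2 * C * s * (((j : ℝ) * τ) ^ β * exp (lam * (j * τ))))
      + C * ((n : ℝ) * τ) ^ β * s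
      ≤ 2 * C * s * (((n : ℝ) * τ) ^ β * exp (lam * (n * τ))) := by
  have hexp : 1 ≤ exp (lam * (n * τ)) := one_le_exp (by positivity)
  calc _ = 4 * C ^ 2 * s * ∑ j ∈ Ico 1 n, τ * (((n - j : ℕ) : ℝ) * τ) ^ (-γ)
          * (((j : ℝ) * τ) ^ β * exp (lam * (j * τ)))
        + C * s * (((n : ℝ) * τ) ^ β * 1) := by
        rw [mul_sum]; congr 1
        · exact sum_congr rfl fun _ _ => by ring
        · ring
    _ ≤ 4 * C ^ 2 * s * (1 / (4 * C) * (((n : ℝ) * τ) ^ β * exp (lam * (n * τ))))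
        + C * s * (((n : ℝ) * τ) ^ β * exp (lam * (n * τ))) := by
        gcongr
    _ = _ := by field_simp; ring

theorem discrete_gronwall_weakly_singular_general
    (C γ ζ T : ℝ) (hC : 0 < C) (hγ : γ ∈ Set.Ioo (0:ℝ) 1)
    (hζ : ζ ∈ Set.Ioo (0:ℝ) (1/2)) :
    ∃ C' > 0, ∀ (τ : ℝ) (N : ℕ) (e : ℕ → ℝ), 0 < τ → (N : ℝ) * τ ≤ T →
      (∀ n, 0 ≤ e n) → e 0 = 0 →
      (∀ n, 1 ≤ n → n ≤ N →
        e n ≤ C * τ * ∑ j ∈ Finset.Icc 1 (n - 2),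
                (((n - j - 1 : ℕ) : ℝ) * τ) ^ (-γ) * e j
              + C * τ ^ (1 - γ) * e (n - 1)
              + C * ((n : ℝ) * τ) ^ (-1 + 2 * ζ) * τ ^ (3 - 2 * ζ)) →
      ∀ n, 1 ≤ n → n ≤ N → e n ≤ C' * ((n : ℝ) * τ) ^ (-1 + 2 * ζ) * τ ^ (3 - 2 * ζ) := by
  obtain ⟨hγ₀, hγ₁⟩ := hγ
  obtain ⟨hζ₀, hζ₁⟩ := hζ
  obtain ⟨lam, hlam, hconv⟩ := exists_sum_Ico_convolution_le (β := -1 + 2 * ζ) (ε := 1 / (4 * C))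
    hγ₀.le hγ₁ (by linarith) (by linarith) (by positivity)
  refine ⟨2 * C * exp (lam * T), by positivity, fun τ N e hτ hNT he he₀ hrec n hn hnN => ?_⟩
  have hsub (m : ℕ) (hm : 1 ≤ m) (hmN : m ≤ N) :
      e m ≤ ∑ j ∈ Ico 1 m, 2 * C * (τ * (((m - j : ℕ) : ℝ) * τ) ^ (-γ)) * e j
        + C * ((m : ℝ) * τ) ^ (-1 + 2 * ζ) * τ ^ (3 - 2 * ζ) := by
    have hshift := mul_le_mul_of_nonneg_left (shifted_kernel_sum_le hτ hγ₀.le hγ₁.le he he₀ m) hC.le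
    have hK : ∑ j ∈ Ico 1 m, 2 * C * (τ * (((m - j : ℕ) : ℝ) * τ) ^ (-γ)) * e j
        = C * (2 * ∑ j ∈ Ico 1 m, τ * (((m - j : ℕ) : ℝ) * τ) ^ (-γ) * e j) := by
      rw [mul_sum, mul_sum]; exact sum_congr rfl fun _ _ => by ring
    linarith [hrec m hm hmN]
  calc e n ≤ 2 * C * τ ^ (3 - 2 * ζ) * (((n : ℝ) * τ) ^ (-1 + 2 * ζ) * exp (lam * (n * τ))) :=
        le_of_subsolution_of_supersolution (fun _ _ => by positivity) hsub
          (fun m _ _ => sum_kernel_mul_add_le_of_convolution_le hC (by positivity) hlam.le hτ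
            (hconv τ hτ m)) n hn hnN
    _ ≤ 2 * C * τ ^ (3 - 2 * ζ) * (((n : ℝ) * τ) ^ (-1 + 2 * ζ) * exp (lam * T)) := by
      gcongr
      calc (n : ℝ) * τ ≤ N * τ := by gcongr
        _ ≤ T := hNT
    _ = _ := by ring

theorem discrete_gronwall_weakly_singular
    (C γ ζ T : ℝ) (hC : 0 < C) (hγ : γ ∈ Set.Ioo (0:ℝ) 1)
    (hζ : ζ ∈ Set.Ioo (0:ℝ) (1/2)) (hT : 0 < T) :
    ∃ C' > 0, ∀ (τ : ℝ) (N : ℕ) (e : ℕ → ℝ), 0 < τ → (N : ℝ) * τ ≤ T →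
      (∀ n, 0 ≤ e n) → e 0 = 0 →
      (∀ n, 1 ≤ n → n ≤ N →
        e n ≤ C * τ * ∑ j ∈ Finset.Icc 1 (n - 2),
                (((n - j - 1 : ℕ) : ℝ) * τ) ^ (-γ) * e j
              + C * τ ^ (1 - γ) * e (n - 1)
              + C * ((n : ℝ) * τ) ^ (-1 + 2 * ζ) * τ ^ (3 - 2 * ζ)) →
      ∀ n, 1 ≤ n → n ≤ N → e n ≤ C' * ((n : ℝ) * τ) ^ (-1 + 2 * ζ) * τ ^ (3 - 2 * ζ) :=
  discrete_gronwall_weakly_singular_general C γ ζ T hC hγ hζ
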